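/- If e = ẽ = 0, the maximal proper submodule of the Verma module of the Takiff superalgebra of gl(1|1) with highest weight (n,0,ñ,0) is the 3-dimensional subspace spanned by ψ⁻v, ψ̃⁻v, ψ̃⁻ψ⁻v, and the irreducible quotient is 1-dimensional. -/

import Mathlib

/-- A representation of the Takiff superalgebra `g̃l(1|1)` of `gl(1|1)` on a complex
vector space `V`: linear endomorphisms for the even generators `N, E, Ñ, Ẽ` and the odd
generators `ψ⁺, ψ⁻, ψ̃⁺, ψ̃⁻`, subject to all the (super)commutation relations:
`[N,ψ±] = ±ψ±`, `{ψ⁺,ψ⁻} = E`, `[N,ψ̃±] = [Ñ,ψ±] = ±ψ̃±`, `{ψ⁺,ψ̃⁻} = {ψ̃⁺,ψ⁻} = Ẽ`,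
with all remaining (super)brackets equal to zero. -/
structure TakiffGl11Rep (V : Type*) [AddCommGroup V] [Module ℂ V] where
  N : V →ₗ[ℂ] V
  E : V →ₗ[ℂ] V
  Nt : V →ₗ[ℂ] V
  Et : V →ₗ[ℂ] V
  pp : V →ₗ[ℂ] V
  pm : V →ₗ[ℂ] V
  tp : V →ₗ[ℂ] V
  tm : V →ₗ[ℂ] V
  rel_N_E : N ∘ₗ E = E ∘ₗ N
  rel_N_Nt : N ∘ₗ Nt = Nt ∘ₗ N
  rel_N_Et : N ∘ₗ Et = Et ∘ₗ N
  rel_E_Nt : E ∘ₗ Nt = Nt ∘ₗ E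
  rel_E_Et : E ∘ₗ Et = Et ∘ₗ E
  rel_Nt_Et : Nt ∘ₗ Et = Et ∘ₗ Nt
  rel_N_pp : N ∘ₗ pp - pp ∘ₗ N = pp
  rel_N_pm : N ∘ₗ pm - pm ∘ₗ N = -pm
  rel_N_tp : N ∘ₗ tp - tp ∘ₗ N = tp
  rel_N_tm : N ∘ₗ tm - tm ∘ₗ N = -tm
  rel_E_pp : E ∘ₗ pp = pp ∘ₗ E
  rel_E_pm : E ∘ₗ pm = pm ∘ₗ E
  rel_E_tp : E ∘ₗ tp = tp ∘ₗ E
  rel_E_tm : E ∘ₗ tm = tm ∘ₗ E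
  rel_Nt_pp : Nt ∘ₗ pp - pp ∘ₗ Nt = tp
  rel_Nt_pm : Nt ∘ₗ pm - pm ∘ₗ Nt = -tm
  rel_Nt_tp : Nt ∘ₗ tp = tp ∘ₗ Nt
  rel_Nt_tm : Nt ∘ₗ tm = tm ∘ₗ Nt
  rel_Et_pp : Et ∘ₗ pp = pp ∘ₗ Et
  rel_Et_pm : Et ∘ₗ pm = pm ∘ₗ Et
  rel_Et_tp : Et ∘ₗ tp = tp ∘ₗ Et
  rel_Et_tm : Et ∘ₗ tm = tm ∘ₗ Et
  rel_pp_pp : pp ∘ₗ pp = 0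
  rel_pm_pm : pm ∘ₗ pm = 0
  rel_tp_tp : tp ∘ₗ tp = 0
  rel_tm_tm : tm ∘ₗ tm = 0
  rel_pp_pm : pp ∘ₗ pm + pm ∘ₗ pp = E
  rel_pp_tp : pp ∘ₗ tp + tp ∘ₗ pp = 0
  rel_pp_tm : pp ∘ₗ tm + tm ∘ₗ pp = Et
  rel_pm_tp : pm ∘ₗ tp + tp ∘ₗ pm = Et
  rel_pm_tm : pm ∘ₗ tm + tm ∘ₗ pm = 0
  rel_tp_tm : tp ∘ₗ tm + tm ∘ₗ tp = 0

namespace TakiffGl11Rep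

variable {V : Type*} [AddCommGroup V] [Module ℂ V] (ρ : TakiffGl11Rep V)

/-- A submodule invariant under the action of `g̃l(1|1)`. -/
def Invariant (W : Submodule ℂ V) : Prop :=
  ∀ w ∈ W, ρ.N w ∈ W ∧ ρ.E w ∈ W ∧ ρ.Nt w ∈ W ∧ ρ.Et w ∈ W ∧
    ρ.pp w ∈ W ∧ ρ.pm w ∈ W ∧ ρ.tp w ∈ W ∧ ρ.tm w ∈ W

/-- `v` is a highest weight vector of weight `(n, e, ñ, ẽ)`: a nonzero simultaneous
eigenvector of the Cartan generators annihilated by the raising operators `ψ⁺, ψ̃⁺`. -/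
def IsHW (v : V) (n e nt et : ℂ) : Prop :=
  v ≠ 0 ∧ ρ.N v = n • v ∧ ρ.E v = e • v ∧ ρ.Nt v = nt • v ∧ ρ.Et v = et • v ∧
    ρ.pp v = 0 ∧ ρ.tp v = 0

/-- `(V, v)` is the Verma module of highest weight `(n, e, ñ, ẽ)`: `v` is a highest
weight vector of that weight, the lowering operators `ψ⁻, ψ̃⁻` act freely on `v`
(`v, ψ⁻v, ψ̃⁻v, ψ̃⁻ψ⁻v` are linearly independent), and `v` generates `V`. -/
def IsVerma (v : V) (n e nt et : ℂ) : Prop :=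
  ρ.IsHW v n e nt et ∧
  LinearIndependent ℂ ![v, ρ.pm v, ρ.tm v, ρ.tm (ρ.pm v)] ∧
  ∀ W : Submodule ℂ V, ρ.Invariant W → v ∈ W → W = ⊤

/-- The quadratic Casimir `Q₁ = NẼ + ÑE + ψ⁻ψ̃⁺ + ψ̃⁻ψ⁺`. -/
def Q₁ : V →ₗ[ℂ] V := ρ.N ∘ₗ ρ.Et + ρ.Nt ∘ₗ ρ.E + ρ.pm ∘ₗ ρ.tp + ρ.tm ∘ₗ ρ.pp

/-- The quadratic Casimir `Q₂ = ÑẼ + ψ̃⁻ψ̃⁺`. -/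
def Q₂ : V →ₗ[ℂ] V := ρ.Nt ∘ₗ ρ.Et + ρ.tm ∘ₗ ρ.tp

end TakiffGl11Rep

/-! When `e = ẽ = 0`, normal ordering shows that `L = span {ψ⁻v, ψ̃⁻v, ψ̃⁻ψ⁻v}` is invariant and
that `ℂv + L` is invariant, hence all of `V`; linear independence then gives `dim L = 3`, `dim V = 4`.
On `L` the operator `ψ̃⁻ψ⁻` vanishes while `ψ⁻` and `ψ̃⁻` land in `ℂ ψ̃⁻ψ⁻v`. So if an invariant `W`
satisfies `v ∈ W + L`, applying `ψ̃⁻ψ⁻`, `ψ⁻`, `ψ̃⁻` to `v` puts the three generators of `L` in `W`,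
and then `v ∈ W`. Any invariant `W ⊄ L` has `v ∈ W + L` because `L` has codimension one. -/

namespace TakiffGl11Rep

open Submodule Module

variable {V : Type*} [AddCommGroup V] [Module ℂ V] (ρ : TakiffGl11Rep V)

section Commutation

-- Normal-ordering rules: the lowering operators `ψ⁻, ψ̃⁻` are moved to the left.

variable (x : V)

@[simp]
theorem pm_pm_apply : ρ.pm (ρ.pm x) = 0 := by
  simpa using LinearMap.congr_fun ρ.rel_pm_pm x

@[simp]
theorem tm_tm_apply : ρ.tm (ρ.tm x) = 0 := by
  simpa using LinearMap.congr_fun ρ.rel_tm_tm x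

@[simp]
theorem pm_tm_apply : ρ.pm (ρ.tm x) = -ρ.tm (ρ.pm x) := by
  simpa [add_eq_zero_iff_eq_neg] using LinearMap.congr_fun ρ.rel_pm_tm x

@[simp]
theorem N_pm_apply : ρ.N (ρ.pm x) = ρ.pm (ρ.N x) - ρ.pm x := by
  simpa [sub_eq_iff_eq_add, neg_add_eq_sub] using LinearMap.congr_fun ρ.rel_N_pm x

@[simp]
theorem N_tm_apply : ρ.N (ρ.tm x) = ρ.tm (ρ.N x) - ρ.tm x := by
  simpa [sub_eq_iff_eq_add, neg_add_eq_sub] using LinearMap.congr_fun ρ.rel_N_tm x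

@[simp]
theorem Nt_pm_apply : ρ.Nt (ρ.pm x) = ρ.pm (ρ.Nt x) - ρ.tm x := by
  simpa [sub_eq_iff_eq_add, neg_add_eq_sub] using LinearMap.congr_fun ρ.rel_Nt_pm x

@[simp]
theorem Nt_tm_apply : ρ.Nt (ρ.tm x) = ρ.tm (ρ.Nt x) :=
  LinearMap.congr_fun ρ.rel_Nt_tm x

@[simp]
theorem E_pm_apply : ρ.E (ρ.pm x) = ρ.pm (ρ.E x) :=
  LinearMap.congr_fun ρ.rel_E_pm x

@[simp]
theorem E_tm_apply : ρ.E (ρ.tm x) = ρ.tm (ρ.E x) :=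
  LinearMap.congr_fun ρ.rel_E_tm x

@[simp]
theorem Et_pm_apply : ρ.Et (ρ.pm x) = ρ.pm (ρ.Et x) :=
  LinearMap.congr_fun ρ.rel_Et_pm x

@[simp]
theorem Et_tm_apply : ρ.Et (ρ.tm x) = ρ.tm (ρ.Et x) :=
  LinearMap.congr_fun ρ.rel_Et_tm x

@[simp]
theorem pp_pm_apply : ρ.pp (ρ.pm x) = ρ.E x - ρ.pm (ρ.pp x) := by
  simpa [eq_sub_iff_add_eq] using LinearMap.congr_fun ρ.rel_pp_pm x

@[simp]
theorem pp_tm_apply : ρ.pp (ρ.tm x) = ρ.Et x - ρ.tm (ρ.pp x) := by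
  simpa [eq_sub_iff_add_eq] using LinearMap.congr_fun ρ.rel_pp_tm x

@[simp]
theorem tp_pm_apply : ρ.tp (ρ.pm x) = ρ.Et x - ρ.pm (ρ.tp x) := by
  simpa [eq_sub_iff_add_eq, add_comm] using LinearMap.congr_fun ρ.rel_pm_tp x

@[simp]
theorem tp_tm_apply : ρ.tp (ρ.tm x) = -ρ.tm (ρ.tp x) := by
  simpa [add_eq_zero_iff_eq_neg] using LinearMap.congr_fun ρ.rel_tp_tm x

end Commutation

theorem invariant_span {s : Set V}
    (h : ∀ x ∈ s, ρ.N x ∈ span ℂ s ∧ ρ.E x ∈ span ℂ s ∧ ρ.Nt x ∈ span ℂ s ∧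
      ρ.Et x ∈ span ℂ s ∧ ρ.pp x ∈ span ℂ s ∧ ρ.pm x ∈ span ℂ s ∧
      ρ.tp x ∈ span ℂ s ∧ ρ.tm x ∈ span ℂ s) :
    ρ.Invariant (span ℂ s) := by
  intro w hw
  have stable {f : V →ₗ[ℂ] V} (hf : ∀ x ∈ s, f x ∈ span ℂ s) : f w ∈ span ℂ s :=
    (span_le.2 hf : span ℂ s ≤ (span ℂ s).comap f) hw
  exact ⟨stable fun x hx ↦ (h x hx).1, stable fun x hx ↦ (h x hx).2.1,
    stable fun x hx ↦ (h x hx).2.2.1, stable fun x hx ↦ (h x hx).2.2.2.1,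
    stable fun x hx ↦ (h x hx).2.2.2.2.1, stable fun x hx ↦ (h x hx).2.2.2.2.2.1,
    stable fun x hx ↦ (h x hx).2.2.2.2.2.2.1, stable fun x hx ↦ (h x hx).2.2.2.2.2.2.2⟩

def lowerSpan (v : V) : Submodule ℂ V :=
  span ℂ {ρ.pm v, ρ.tm v, ρ.tm (ρ.pm v)}

variable {ρ}

theorem lowerSpan_le_comap_pm (v : V) :
    ρ.lowerSpan v ≤ (ℂ ∙ ρ.tm (ρ.pm v)).comap ρ.pm := by
  refine span_le.2 ?_
  simp [Set.insert_subset_iff, mem_span_singleton_self]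

theorem lowerSpan_le_comap_tm (v : V) :
    ρ.lowerSpan v ≤ (ℂ ∙ ρ.tm (ρ.pm v)).comap ρ.tm := by
  refine span_le.2 ?_
  simp [Set.insert_subset_iff, mem_span_singleton_self]

theorem lowerSpan_le_ker (v : V) : ρ.lowerSpan v ≤ LinearMap.ker (ρ.tm ∘ₗ ρ.pm) := by
  refine span_le.2 ?_
  simp [Set.insert_subset_iff]

theorem mem_of_mem_sup_lowerSpan {v : V} {W : Submodule ℂ V} (hW : ρ.Invariant W)
    (hv : v ∈ W ⊔ ρ.lowerSpan v) : v ∈ W := by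
  obtain ⟨x, hx, y, hy, rfl⟩ := mem_sup.1 hv
  have hpm : ρ.pm x ∈ W := (hW x hx).2.2.2.2.2.1
  have htm : ρ.tm x ∈ W := (hW x hx).2.2.2.2.2.2.2
  have hc : ρ.tm (ρ.pm (x + y)) ∈ W := by
    have hy0 : ρ.tm (ρ.pm y) = 0 := lowerSpan_le_ker _ hy
    simpa [hy0] using (hW _ hpm).2.2.2.2.2.2.2
  have hcW : ℂ ∙ ρ.tm (ρ.pm (x + y)) ≤ W := (span_singleton_le_iff_mem _ _).2 hc
  have hb : ρ.tm (x + y) ∈ W := by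
    rw [map_add]; exact W.add_mem htm (hcW (lowerSpan_le_comap_tm _ hy))
  have ha : ρ.pm (x + y) ∈ W := by
    rw [map_add]; exact W.add_mem hpm (hcW (lowerSpan_le_comap_pm _ hy))
  have hle : ρ.lowerSpan (x + y) ≤ W := by
    rw [lowerSpan, span_le, Set.insert_subset_iff, Set.insert_subset_iff, Set.singleton_subset_iff]
    exact ⟨ha, hb, hc⟩
  exact W.add_mem hx (hle hy)

variable {v : V} {n nt : ℂ}

theorem invariant_lowerSpan (hv : ρ.IsHW v n 0 nt 0) : ρ.Invariant (ρ.lowerSpan v) := by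
  obtain ⟨-, hN, hE, hNt, hEt, hpp, htp⟩ := hv
  refine ρ.invariant_span fun x hx ↦ ?_
  rcases hx with rfl | rfl | rfl <;>
  simp [hN, hE, hNt, hEt, hpp, htp, sub_mem_iff_left, Submodule.smul_mem, mem_span_of_mem]

theorem invariant_span_insert_lowering (hv : ρ.IsHW v n 0 nt 0) :
    ρ.Invariant (span ℂ {v, ρ.pm v, ρ.tm v, ρ.tm (ρ.pm v)}) := by
  obtain ⟨-, hN, hE, hNt, hEt, hpp, htp⟩ := hv
  refine ρ.invariant_span fun x hx ↦ ?_
  rcases hx with rfl | rfl | rfl | rfl <;>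
  simp [hN, hE, hNt, hEt, hpp, htp, sub_mem_iff_left, Submodule.smul_mem, mem_span_of_mem]

namespace IsVerma

theorem span_eq_top (h : ρ.IsVerma v n 0 nt 0) :
    span ℂ {v, ρ.pm v, ρ.tm v, ρ.tm (ρ.pm v)} = ⊤ :=
  h.2.2 _ (invariant_span_insert_lowering h.1) (subset_span (Set.mem_insert v _))

theorem le_lowerSpan (h : ρ.IsVerma v n 0 nt 0) {W : Submodule ℂ V} (hW : ρ.Invariant W)
    (hne : W ≠ ⊤) : W ≤ ρ.lowerSpan v := by
  intro x hx
  by_contra hxv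
  have hv : v ∈ span ℂ (insert x {ρ.pm v, ρ.tm v, ρ.tm (ρ.pm v)}) :=
    mem_span_insert_exchange (by rw [h.span_eq_top]; trivial) hxv
  have hle : span ℂ (insert x {ρ.pm v, ρ.tm v, ρ.tm (ρ.pm v)}) ≤ W ⊔ ρ.lowerSpan v := by
    rw [span_insert]
    exact sup_le_sup_right ((span_singleton_le_iff_mem _ _).2 hx) _
  exact hne (h.2.2 W hW (mem_of_mem_sup_lowerSpan hW (hle hv)))

theorem notMem_lowerSpan (h : ρ.IsVerma v n 0 nt 0) : v ∉ ρ.lowerSpan v := by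
  have := (linearIndependent_finCons.1 h.2.1).2
  rwa [Matrix.range_cons, Matrix.range_cons_cons_empty, Set.singleton_union] at this

theorem finrank_lowerSpan (h : ρ.IsVerma v n 0 nt 0) : finrank ℂ (ρ.lowerSpan v) = 3 := by
  have := finrank_span_eq_card (linearIndependent_finCons.1 h.2.1).1
  rwa [Matrix.range_cons, Matrix.range_cons_cons_empty, Set.singleton_union,
    Fintype.card_fin] at this

theorem finrank_eq_four (h : ρ.IsVerma v n 0 nt 0) : finrank ℂ V = 4 := by
  have := finrank_span_eq_card h.2.1
  rwa [Matrix.range_cons, Matrix.range_cons, Matrix.range_cons_cons_empty, Set.singleton_union,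
    Set.singleton_union, h.span_eq_top, finrank_top, Fintype.card_fin] at this

theorem lowerSpan_ne_top (h : ρ.IsVerma v n 0 nt 0) : ρ.lowerSpan v ≠ ⊤ := fun htop ↦
  h.notMem_lowerSpan (htop ▸ mem_top)

theorem finrank_quotient_lowerSpan (h : ρ.IsVerma v n 0 nt 0) :
    finrank ℂ (V ⧸ ρ.lowerSpan v) = 1 := by
  have hV := h.finrank_eq_four
  have : FiniteDimensional ℂ V := finite_of_finrank_eq_succ hV
  have := (ρ.lowerSpan v).finrank_quotient_add_finrank
  rw [h.finrank_lowerSpan, hV] at this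
  omega

end IsVerma

end TakiffGl11Rep

/-- If `e = ẽ = 0`, the maximal proper submodule of the Verma module of the Takiff
superalgebra of `gl(1|1)` with highest weight `(n, 0, ñ, 0)` is the 3-dimensional
subspace spanned by `ψ⁻v, ψ̃⁻v, ψ̃⁻ψ⁻v`, and the irreducible quotient is 1-dimensional. -/
theorem takiff_gl11_verma_atypical_structure {V : Type*} [AddCommGroup V] [Module ℂ V]
    (ρ : TakiffGl11Rep V) (v : V) (n nt : ℂ) (h : ρ.IsVerma v n 0 nt 0) :
    ρ.Invariant (Submodule.span ℂ {ρ.pm v, ρ.tm v, ρ.tm (ρ.pm v)}) ∧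
    Module.finrank ℂ (Submodule.span ℂ {ρ.pm v, ρ.tm v, ρ.tm (ρ.pm v)}) = 3 ∧
    Submodule.span ℂ {ρ.pm v, ρ.tm v, ρ.tm (ρ.pm v)} ≠ ⊤ ∧
    (∀ W : Submodule ℂ V, ρ.Invariant W → W ≠ ⊤ →
      W ≤ Submodule.span ℂ {ρ.pm v, ρ.tm v, ρ.tm (ρ.pm v)}) ∧
    Module.finrank ℂ (V ⧸ Submodule.span ℂ {ρ.pm v, ρ.tm v, ρ.tm (ρ.pm v)}) = 1 := by
  exact ⟨TakiffGl11Rep.invariant_lowerSpan h.1, h.finrank_lowerSpan, h.lowerSpan_ne_top,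
    fun _ ↦ h.le_lowerSpan, h.finrank_quotient_lowerSpan⟩
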